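/- In a hyperbolic conformal triangle datum, let A := π − γ₁ − γ₂ − γ₃ (the area of the hyperbolic triangle). Then at every point of U and for each k ∈ {1,2,3} with {i,j,k} = {1,2,3}: ∂A/∂f_k = (cosh ℓ_ik − 1)·∂γ_i/∂f_k + (cosh ℓ_jk − 1)·∂γ_j/∂f_k. In particular, if ∂γ_i/∂f_k > 0 and ∂γ_j/∂f_k > 0 at a point, then ∂A/∂f_k > 0 there. -/

import Mathlib

noncomputable section

/-- Partial derivative of `F` in the `k`-th coordinate direction at `x`. -/
def pd (k : Fin 3) (F : (Fin 3 → ℝ) → ℝ) (x : Fin 3 → ℝ) : ℝ :=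
  fderiv ℝ F x (Pi.single k 1)

/-- The edge length `ℓ_ij = d_ij + d_ji` determined by the partial edge lengths. -/
def len (d : Fin 3 → Fin 3 → (Fin 3 → ℝ) → ℝ) (i j : Fin 3) (x : Fin 3 → ℝ) : ℝ :=
  d i j x + d j i x

/-- The index complementary to `i` and `j` in `{0,1,2}` (for `i ≠ j`). -/
def other (i j : Fin 3) : Fin 3 := -(i + j)

/-- The angle `γ_i` of the hyperbolic triangle with side lengths `ℓ_ab`, defined by the
hyperbolic law of cosines
`cos γ_i = (cosh ℓ_ij cosh ℓ_ik − cosh ℓ_jk)/(sinh ℓ_ij sinh ℓ_ik)`. -/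
def hGamma (d : Fin 3 → Fin 3 → (Fin 3 → ℝ) → ℝ) (i : Fin 3) (x : Fin 3 → ℝ) : ℝ :=
  Real.arccos ((Real.cosh (len d i (i+1) x) * Real.cosh (len d i (i+2) x)
      - Real.cosh (len d (i+1) (i+2) x)) /
    (Real.sinh (len d i (i+1) x) * Real.sinh (len d i (i+2) x)))

/-- The height factor `T_ij = cosh d_ij (tanh d_ik − tanh d_ij cos γ_i)/sin γ_i`
(geometrically `tanh^β h_ij`). -/
def hT (d : Fin 3 → Fin 3 → (Fin 3 → ℝ) → ℝ) (i j : Fin 3) (x : Fin 3 → ℝ) : ℝ :=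
  Real.cosh (d i j x) * (Real.tanh (d i (other i j) x)
      - Real.tanh (d i j x) * Real.cos (hGamma d i x)) / Real.sin (hGamma d i x)

/-! ### Auxiliary lemmas -/

private lemma len_comm' (d : Fin 3 → Fin 3 → (Fin 3 → ℝ) → ℝ) (i j : Fin 3) :
    len d i j = len d j i := by
  funext x; simp [len, add_comm]

private lemma fin3_succ (i j k : Fin 3) (h1 : i ≠ j) (h2 : j ≠ k) (h3 : i ≠ k) :
    (j = i + 1 ∧ k = i + 2) ∨ (j = i + 2 ∧ k = i + 1) := by
  revert h1 h2 h3; revert i j k; decide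

private lemma perm3 (i j k : Fin 3) (h1 : i ≠ j) (h2 : j ≠ k) (h3 : i ≠ k) :
    i = 0 ∧ j = 1 ∧ k = 2 ∨ i = 0 ∧ j = 2 ∧ k = 1 ∨ i = 1 ∧ j = 0 ∧ k = 2 ∨
    i = 1 ∧ j = 2 ∧ k = 0 ∨ i = 2 ∧ j = 0 ∧ k = 1 ∨ i = 2 ∧ j = 1 ∧ k = 0 := by
  revert h1 h2 h3; revert i j k; decide

private lemma hGamma_eq (d : Fin 3 → Fin 3 → (Fin 3 → ℝ) → ℝ) (i j k : Fin 3)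
    (h1 : i ≠ j) (h2 : j ≠ k) (h3 : i ≠ k) :
    hGamma d i = fun x => Real.arccos ((Real.cosh (len d i j x) * Real.cosh (len d i k x)
        - Real.cosh (len d j k x)) / (Real.sinh (len d i j x) * Real.sinh (len d i k x))) := by
  rcases fin3_succ i j k h1 h2 h3 with ⟨rfl, rfl⟩ | ⟨rfl, rfl⟩
  · rfl
  · funext x
    unfold hGamma
    congr 1
    rw [len_comm' d (i+1) (i+2)]
    ring

private lemma pd_line {F : (Fin 3 → ℝ) → ℝ} {x : Fin 3 → ℝ} (k : Fin 3)
    (hF : DifferentiableAt ℝ F x) :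
    HasDerivAt (fun t : ℝ => F (x + t • (Pi.single k 1 : Fin 3 → ℝ))) (pd k F x) 0 := by
  have hline : HasDerivAt (fun t : ℝ => x + t • (Pi.single k 1 : Fin 3 → ℝ))
      (Pi.single k 1 : Fin 3 → ℝ) 0 := by
    simpa using ((hasDerivAt_id (0:ℝ)).smul_const (Pi.single k 1 : Fin 3 → ℝ)).const_add x
  have hF' : HasFDerivAt F (fderiv ℝ F x)
      (x + (0:ℝ) • (Pi.single k 1 : Fin 3 → ℝ)) := by
    have h0 : x + (0:ℝ) • (Pi.single k 1 : Fin 3 → ℝ) = x := by simp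
    rw [h0]; exact hF.hasFDerivAt
  exact hF'.comp_hasDerivAt 0 hline

private lemma diff_d {U : Set (Fin 3 → ℝ)} (hUopen : IsOpen U)
    {d : Fin 3 → Fin 3 → (Fin 3 → ℝ) → ℝ}
    (hsmooth : ∀ i j : Fin 3, i ≠ j → ContDiffOn ℝ (⊤ : ℕ∞) (d i j) U)
    {x : Fin 3 → ℝ} (hx : x ∈ U) {i j : Fin 3} (hij : i ≠ j) :
    DifferentiableAt ℝ (d i j) x :=
  ((hsmooth i j hij).contDiffAt (hUopen.mem_nhds hx)).differentiableAt (by simp)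

private lemma diff_len {U : Set (Fin 3 → ℝ)} (hUopen : IsOpen U)
    {d : Fin 3 → Fin 3 → (Fin 3 → ℝ) → ℝ}
    (hsmooth : ∀ i j : Fin 3, i ≠ j → ContDiffOn ℝ (⊤ : ℕ∞) (d i j) U)
    {x : Fin 3 → ℝ} (hx : x ∈ U) {i j : Fin 3} (hij : i ≠ j) :
    DifferentiableAt ℝ (len d i j) x :=
  (diff_d hUopen hsmooth hx hij).add (diff_d hUopen hsmooth hx hij.symm)

private lemma pd_len_zero {U : Set (Fin 3 → ℝ)} (hUopen : IsOpen U)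
    {d : Fin 3 → Fin 3 → (Fin 3 → ℝ) → ℝ}
    (hsmooth : ∀ i j : Fin 3, i ≠ j → ContDiffOn ℝ (⊤ : ℕ∞) (d i j) U)
    (hdep : ∀ i j k : Fin 3, i ≠ j → k ≠ i → k ≠ j → ∀ x ∈ U, pd k (d i j) x = 0)
    {x : Fin 3 → ℝ} (hx : x ∈ U) {i j k : Fin 3} (hij : i ≠ j) (hki : k ≠ i) (hkj : k ≠ j) :
    pd k (len d i j) x = 0 := by
  have h1 := (diff_d hUopen hsmooth hx hij).hasFDerivAt
  have h2 := (diff_d hUopen hsmooth hx hij.symm).hasFDerivAt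
  have h : HasFDerivAt (len d i j) (fderiv ℝ (d i j) x + fderiv ℝ (d j i) x) x := h1.add h2
  have z1 := hdep i j k hij hki hkj x hx
  have z2 := hdep j i k hij.symm hkj hki x hx
  simp only [pd] at z1 z2 ⊢
  rw [h.fderiv]
  simp [z1, z2]

private lemma keyalg (c1 c2 c3 s1 s2 s3 u v W : ℝ)
    (h1 : s1 ^ 2 = c1 ^ 2 - 1) (h2 : s2 ^ 2 = c2 ^ 2 - 1) (h3 : s3 ^ 2 = c3 ^ 2 - 1)
    (hs1 : s1 ≠ 0) (hs2 : s2 ≠ 0) (hs3 : s3 ≠ 0) (hW : W ≠ 0) :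
    ((c2 * c3 - c1) * (c2 * u * s3 + s2 * (c3 * v))
        - (s2 * u * c3 + c2 * (s3 * v) - s1 * 0) * (s2 * s3)) / (W * (s2 * s3))
      = -(c2 * (((c1 * c2 - c3) * (c1 * 0 * s2 + s1 * (c2 * u))
            - (s1 * 0 * c2 + c1 * (s2 * u) - s3 * v) * (s1 * s2)) / (W * (s1 * s2)))
          + c3 * (((c1 * c3 - c2) * (c1 * 0 * s3 + s1 * (c3 * v))
            - (s1 * 0 * c3 + c1 * (s3 * v) - s2 * u) * (s1 * s3)) / (W * (s1 * s3)))) := by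
  field_simp
  linear_combination (-(c1*c2*u*s1*s3)) * h2 + (-(c1*c3*v*s1*s2)) * h3


private lemma pd_gamma
    {U : Set (Fin 3 → ℝ)} (hUopen : IsOpen U)
    {d : Fin 3 → Fin 3 → (Fin 3 → ℝ) → ℝ}
    (hsmooth : ∀ i j : Fin 3, i ≠ j → ContDiffOn ℝ (⊤ : ℕ∞) (d i j) U)
    (hpos : ∀ i j : Fin 3, i ≠ j → ∀ x ∈ U, 0 < len d i j x)
    (htri : ∀ i j k : Fin 3, i ≠ j → j ≠ k → i ≠ k → ∀ x ∈ U,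
      len d i j x < len d i k x + len d k j x)
    {x : Fin 3 → ℝ} (hx : x ∈ U) (p q r k : Fin 3)
    (hpq : p ≠ q) (hqr : q ≠ r) (hpr : p ≠ r)
    (P : ℝ)
    (hP : P = 1 - Real.cosh (len d p q x) ^ 2 - Real.cosh (len d p r x) ^ 2
        - Real.cosh (len d q r x) ^ 2
        + 2 * (Real.cosh (len d p q x) * Real.cosh (len d p r x) * Real.cosh (len d q r x))) :
    0 < P ∧ DifferentiableAt ℝ (hGamma d p) x ∧
      pd k (hGamma d p) x =
        ((Real.cosh (len d p q x) * Real.cosh (len d p r x) - Real.cosh (len d q r x)) *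
            (Real.cosh (len d p q x) * pd k (len d p q) x * Real.sinh (len d p r x)
              + Real.sinh (len d p q x) * (Real.cosh (len d p r x) * pd k (len d p r) x))
          - (Real.sinh (len d p q x) * pd k (len d p q) x * Real.cosh (len d p r x)
              + Real.cosh (len d p q x) * (Real.sinh (len d p r x) * pd k (len d p r) x)
              - Real.sinh (len d q r x) * pd k (len d q r) x)
            * (Real.sinh (len d p q x) * Real.sinh (len d p r x)))
        / (Real.sqrt P * (Real.sinh (len d p q x) * Real.sinh (len d p r x))) := by
  have hl1 : 0 < len d p q x := hpos p q hpq x hx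
  have hl2 : 0 < len d p r x := hpos p r hpr x hx
  have hl3 : 0 < len d q r x := hpos q r hqr x hx
  have hs1 : 0 < Real.sinh (len d p q x) := Real.sinh_pos_iff.2 hl1
  have hs2 : 0 < Real.sinh (len d p r x) := Real.sinh_pos_iff.2 hl2
  have hs3 : 0 < Real.sinh (len d q r x) := Real.sinh_pos_iff.2 hl3
  have ht1 : len d p q x < len d p r x + len d q r x := by
    have h := htri p q r hpq hqr hpr x hx
    rwa [len_comm' d r q] at h
  have ht2 : len d p r x < len d p q x + len d q r x := by
    exact htri p r q hpr hqr.symm hpq x hx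
  have ht3 : len d q r x < len d p q x + len d p r x := by
    have h := htri q r p hqr (Ne.symm hpr) (Ne.symm hpq) x hx
    rwa [len_comm' d q p] at h
  have hden : 0 < Real.sinh (len d p q x) * Real.sinh (len d p r x) := mul_pos hs1 hs2
  have hcoshlt : Real.cosh (len d p q x - len d p r x) < Real.cosh (len d q r x) := by
    rw [Real.cosh_lt_cosh, abs_of_pos hl3, abs_sub_lt_iff]
    constructor <;> linarith
  have hcoshgt : Real.cosh (len d q r x) < Real.cosh (len d p q x + len d p r x) := by
    rw [Real.cosh_lt_cosh, abs_of_pos hl3, abs_of_pos (by linarith : (0:ℝ) < len d p q x + len d p r x)]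
    exact ht3
  rw [Real.cosh_sub] at hcoshlt
  rw [Real.cosh_add] at hcoshgt
  have hQ1 : (Real.cosh (len d p q x) * Real.cosh (len d p r x) - Real.cosh (len d q r x)) /
      (Real.sinh (len d p q x) * Real.sinh (len d p r x)) < 1 :=
    (div_lt_one hden).2 (by linarith)
  have hQ2 : (-1 : ℝ) < (Real.cosh (len d p q x) * Real.cosh (len d p r x) - Real.cosh (len d q r x)) /
      (Real.sinh (len d p q x) * Real.sinh (len d p r x)) := by
    rw [lt_div_iff₀ hden]
    linarith
  have hne1 : (Real.cosh (len d p q x) * Real.cosh (len d p r x) - Real.cosh (len d q r x)) /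
      (Real.sinh (len d p q x) * Real.sinh (len d p r x)) ≠ 1 := ne_of_lt hQ1
  have hne1' : (Real.cosh (len d p q x) * Real.cosh (len d p r x) - Real.cosh (len d q r x)) /
      (Real.sinh (len d p q x) * Real.sinh (len d p r x)) ≠ -1 := ne_of_gt hQ2
  -- the key square identity
  have e1 := Real.sinh_sq (len d p q x)
  have e2 := Real.sinh_sq (len d p r x)
  have key0 : (1 - ((Real.cosh (len d p q x) * Real.cosh (len d p r x) - Real.cosh (len d q r x)) /
      (Real.sinh (len d p q x) * Real.sinh (len d p r x))) ^ 2)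
        * (Real.sinh (len d p q x) * Real.sinh (len d p r x)) ^ 2 = P := by
    rw [hP, div_pow, one_sub_div (pow_ne_zero 2 hden.ne'),
      div_mul_cancel₀ _ (pow_ne_zero 2 hden.ne')]
    linear_combination (Real.sinh (len d p r x)) ^ 2 * e1 +
      (Real.cosh (len d p q x) ^ 2 - 1) * e2
  have hQsqpos : 0 < 1 - ((Real.cosh (len d p q x) * Real.cosh (len d p r x) - Real.cosh (len d q r x)) /
      (Real.sinh (len d p q x) * Real.sinh (len d p r x))) ^ 2 := by nlinarith
  have hPpos : 0 < P := by
    rw [← key0]; exact mul_pos hQsqpos (by positivity)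
  have h1mQ : 1 - ((Real.cosh (len d p q x) * Real.cosh (len d p r x) - Real.cosh (len d q r x)) /
      (Real.sinh (len d p q x) * Real.sinh (len d p r x))) ^ 2
        = P / (Real.sinh (len d p q x) * Real.sinh (len d p r x)) ^ 2 := by
    rw [eq_div_iff (pow_ne_zero 2 hden.ne')]; exact key0
  have hsqrt : Real.sqrt (1 - ((Real.cosh (len d p q x) * Real.cosh (len d p r x) - Real.cosh (len d q r x)) /
      (Real.sinh (len d p q x) * Real.sinh (len d p r x))) ^ 2)
        = Real.sqrt P / (Real.sinh (len d p q x) * Real.sinh (len d p r x)) := by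
    rw [h1mQ, Real.sqrt_div hPpos.le, Real.sqrt_sq hden.le]
  -- differentiability
  have dL1 : DifferentiableAt ℝ (len d p q) x := diff_len hUopen hsmooth hx hpq
  have dL2 : DifferentiableAt ℝ (len d p r) x := diff_len hUopen hsmooth hx hpr
  have dL3 : DifferentiableAt ℝ (len d q r) x := diff_len hUopen hsmooth hx hqr
  have hQdiff : DifferentiableAt ℝ (fun y =>
      (Real.cosh (len d p q y) * Real.cosh (len d p r y) - Real.cosh (len d q r y)) /
        (Real.sinh (len d p q y) * Real.sinh (len d p r y))) x := by
    simp only [div_eq_mul_inv]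
    exact ((dL1.cosh.mul dL2.cosh).sub dL3.cosh).mul ((dL1.sinh.mul dL2.sinh).inv hden.ne')
  have hγdiff : DifferentiableAt ℝ (hGamma d p) x := by
    rw [hGamma_eq d p q r hpq hqr hpr]
    have h := (Real.differentiableAt_arccos.2 ⟨hne1', hne1⟩).comp x hQdiff
    exact h
  -- scalar derivatives along the line
  have hL1 := pd_line k dL1
  have hL2 := pd_line k dL2
  have hL3 := pd_line k dL3
  have hc1 : HasDerivAt (fun t : ℝ => Real.cosh (len d p q (x + t • (Pi.single k 1 : Fin 3 → ℝ))))
      (Real.sinh (len d p q x) * pd k (len d p q) x) 0 := by simpa using hL1.cosh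
  have hc2 : HasDerivAt (fun t : ℝ => Real.cosh (len d p r (x + t • (Pi.single k 1 : Fin 3 → ℝ))))
      (Real.sinh (len d p r x) * pd k (len d p r) x) 0 := by simpa using hL2.cosh
  have hc3 : HasDerivAt (fun t : ℝ => Real.cosh (len d q r (x + t • (Pi.single k 1 : Fin 3 → ℝ))))
      (Real.sinh (len d q r x) * pd k (len d q r) x) 0 := by simpa using hL3.cosh
  have hsf1 : HasDerivAt (fun t : ℝ => Real.sinh (len d p q (x + t • (Pi.single k 1 : Fin 3 → ℝ))))
      (Real.cosh (len d p q x) * pd k (len d p q) x) 0 := by simpa using hL1.sinh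
  have hsf2 : HasDerivAt (fun t : ℝ => Real.sinh (len d p r (x + t • (Pi.single k 1 : Fin 3 → ℝ))))
      (Real.cosh (len d p r x) * pd k (len d p r) x) 0 := by simpa using hL2.sinh
  have hnum : HasDerivAt (fun t : ℝ =>
      Real.cosh (len d p q (x + t • (Pi.single k 1 : Fin 3 → ℝ)))
        * Real.cosh (len d p r (x + t • (Pi.single k 1 : Fin 3 → ℝ)))
        - Real.cosh (len d q r (x + t • (Pi.single k 1 : Fin 3 → ℝ))))
      (Real.sinh (len d p q x) * pd k (len d p q) x * Real.cosh (len d p r x)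
        + Real.cosh (len d p q x) * (Real.sinh (len d p r x) * pd k (len d p r) x)
        - Real.sinh (len d q r x) * pd k (len d q r) x) 0 := by
    have h := (hc1.mul hc2).sub hc3
    simp only [zero_smul, add_zero] at h
    exact h
  have hdenf : HasDerivAt (fun t : ℝ =>
      Real.sinh (len d p q (x + t • (Pi.single k 1 : Fin 3 → ℝ)))
        * Real.sinh (len d p r (x + t • (Pi.single k 1 : Fin 3 → ℝ))))
      (Real.cosh (len d p q x) * pd k (len d p q) x * Real.sinh (len d p r x)
        + Real.sinh (len d p q x) * (Real.cosh (len d p r x) * pd k (len d p r) x)) 0 := by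
    have h := hsf1.mul hsf2
    simp only [zero_smul, add_zero] at h
    exact h
  have hQline : HasDerivAt (fun t : ℝ =>
      (Real.cosh (len d p q (x + t • (Pi.single k 1 : Fin 3 → ℝ)))
          * Real.cosh (len d p r (x + t • (Pi.single k 1 : Fin 3 → ℝ)))
          - Real.cosh (len d q r (x + t • (Pi.single k 1 : Fin 3 → ℝ))))
        / (Real.sinh (len d p q (x + t • (Pi.single k 1 : Fin 3 → ℝ)))
          * Real.sinh (len d p r (x + t • (Pi.single k 1 : Fin 3 → ℝ)))))
      (((Real.sinh (len d p q x) * pd k (len d p q) x * Real.cosh (len d p r x)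
          + Real.cosh (len d p q x) * (Real.sinh (len d p r x) * pd k (len d p r) x)
          - Real.sinh (len d q r x) * pd k (len d q r) x)
            * (Real.sinh (len d p q x) * Real.sinh (len d p r x))
        - (Real.cosh (len d p q x) * Real.cosh (len d p r x) - Real.cosh (len d q r x))
            * (Real.cosh (len d p q x) * pd k (len d p q) x * Real.sinh (len d p r x)
              + Real.sinh (len d p q x) * (Real.cosh (len d p r x) * pd k (len d p r) x)))
        / (Real.sinh (len d p q x) * Real.sinh (len d p r x)) ^ 2) 0 := by
    have h := hnum.div hdenf (by simpa using hden.ne')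
    simp only [zero_smul, add_zero] at h
    exact h
  have harc : HasDerivAt (fun t : ℝ => Real.arccos
      ((Real.cosh (len d p q (x + t • (Pi.single k 1 : Fin 3 → ℝ)))
          * Real.cosh (len d p r (x + t • (Pi.single k 1 : Fin 3 → ℝ)))
          - Real.cosh (len d q r (x + t • (Pi.single k 1 : Fin 3 → ℝ))))
        / (Real.sinh (len d p q (x + t • (Pi.single k 1 : Fin 3 → ℝ)))
          * Real.sinh (len d p r (x + t • (Pi.single k 1 : Fin 3 → ℝ))))))
      (-(1 / Real.sqrt (1 - ((Real.cosh (len d p q x) * Real.cosh (len d p r x)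
            - Real.cosh (len d q r x)) /
          (Real.sinh (len d p q x) * Real.sinh (len d p r x))) ^ 2))
        * (((Real.sinh (len d p q x) * pd k (len d p q) x * Real.cosh (len d p r x)
          + Real.cosh (len d p q x) * (Real.sinh (len d p r x) * pd k (len d p r) x)
          - Real.sinh (len d q r x) * pd k (len d q r) x)
            * (Real.sinh (len d p q x) * Real.sinh (len d p r x))
        - (Real.cosh (len d p q x) * Real.cosh (len d p r x) - Real.cosh (len d q r x))
            * (Real.cosh (len d p q x) * pd k (len d p q) x * Real.sinh (len d p r x)
              + Real.sinh (len d p q x) * (Real.cosh (len d p r x) * pd k (len d p r) x)))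
        / (Real.sinh (len d p q x) * Real.sinh (len d p r x)) ^ 2)) 0 := by
    have h := (Real.hasDerivAt_arccos hne1' hne1).comp_of_eq 0 hQline (by simp)
    exact h
  have hpdγ : pd k (hGamma d p) x =
      -(1 / Real.sqrt (1 - ((Real.cosh (len d p q x) * Real.cosh (len d p r x)
            - Real.cosh (len d q r x)) /
          (Real.sinh (len d p q x) * Real.sinh (len d p r x))) ^ 2))
        * (((Real.sinh (len d p q x) * pd k (len d p q) x * Real.cosh (len d p r x)
          + Real.cosh (len d p q x) * (Real.sinh (len d p r x) * pd k (len d p r) x)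
          - Real.sinh (len d q r x) * pd k (len d q r) x)
            * (Real.sinh (len d p q x) * Real.sinh (len d p r x))
        - (Real.cosh (len d p q x) * Real.cosh (len d p r x) - Real.cosh (len d q r x))
            * (Real.cosh (len d p q x) * pd k (len d p q) x * Real.sinh (len d p r x)
              + Real.sinh (len d p q x) * (Real.cosh (len d p r x) * pd k (len d p r) x)))
        / (Real.sinh (len d p q x) * Real.sinh (len d p r x)) ^ 2) := by
    refine (pd_line k hγdiff).unique ?_
    rw [hGamma_eq d p q r hpq hqr hpr]
    exact harc
  refine ⟨hPpos, hγdiff, ?_⟩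
  rw [hpdγ, hsqrt]
  have hsP : 0 < Real.sqrt P := Real.sqrt_pos.2 hPpos
  field_simp
  ring

/-- Proposition 5.5 (variation of hyperbolic area `A = π − γ₁ − γ₂ − γ₃`):
`∂A/∂f_k = (cosh ℓ_ik − 1) ∂γ_i/∂f_k + (cosh ℓ_jk − 1) ∂γ_j/∂f_k`; in particular the
area derivative is positive whenever the two angle derivatives are. -/
theorem hyperbolic_area_variation
    (U : Set (Fin 3 → ℝ)) (hUopen : IsOpen U)
    (d : Fin 3 → Fin 3 → (Fin 3 → ℝ) → ℝ)
    (hsmooth : ∀ i j : Fin 3, i ≠ j → ContDiffOn ℝ (⊤ : ℕ∞) (d i j) U)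
    (hdep : ∀ i j k : Fin 3, i ≠ j → k ≠ i → k ≠ j → ∀ x ∈ U, pd k (d i j) x = 0)
    (hpos : ∀ i j : Fin 3, i ≠ j → ∀ x ∈ U, 0 < len d i j x)
    (htri : ∀ i j k : Fin 3, i ≠ j → j ≠ k → i ≠ k → ∀ x ∈ U,
      len d i j x < len d i k x + len d k j x)
    (hcompat : ∀ x ∈ U,
      Real.cosh (d 0 1 x) * Real.cosh (d 1 2 x) * Real.cosh (d 2 0 x)
        = Real.cosh (d 1 0 x) * Real.cosh (d 2 1 x) * Real.cosh (d 0 2 x))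
    (hconf : ∀ i j : Fin 3, i ≠ j → ∀ x ∈ U, pd i (len d i j) x = Real.tanh (d i j x))
    :
    ∀ x ∈ U, ∀ i j k : Fin 3, i ≠ j → j ≠ k → i ≠ k →
      pd k (fun y => Real.pi - hGamma d 0 y - hGamma d 1 y - hGamma d 2 y) x
        = (Real.cosh (len d i k x) - 1) * pd k (hGamma d i) x
          + (Real.cosh (len d j k x) - 1) * pd k (hGamma d j) x ∧
      (0 < pd k (hGamma d i) x → 0 < pd k (hGamma d j) x →
        0 < pd k (fun y => Real.pi - hGamma d 0 y - hGamma d 1 y - hGamma d 2 y) x) := by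
  intro x hx i j k hij hjk hik
  have hz : pd k (len d i j) x = 0 :=
    pd_len_zero hUopen hsmooth hdep hx hij (Ne.symm hik) (Ne.symm hjk)
  set P := (1 - Real.cosh (len d i j x) ^ 2 - Real.cosh (len d i k x) ^ 2
      - Real.cosh (len d j k x) ^ 2
      + 2 * (Real.cosh (len d i j x) * Real.cosh (len d i k x) * Real.cosh (len d j k x)))
    with hPdef
  obtain ⟨hPpos, hdi, hEi⟩ :=
    pd_gamma hUopen hsmooth hpos htri hx i j k k hij hjk hik P hPdef
  obtain ⟨-, hdj, hEj⟩ :=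
    pd_gamma hUopen hsmooth hpos htri hx j i k k (Ne.symm hij) hik hjk P
      (by rw [hPdef, len_comm' d j i]; ring)
  obtain ⟨-, hdk, hEk⟩ :=
    pd_gamma hUopen hsmooth hpos htri hx k i j k (Ne.symm hik) hij (Ne.symm hjk) P
      (by rw [hPdef, len_comm' d k i, len_comm' d k j]; ring)
  rw [len_comm' d j i] at hEj
  rw [len_comm' d k i, len_comm' d k j] at hEk
  rw [hz] at hEi hEj hEk
  have hl2 : 0 < len d i k x := hpos i k hik x hx
  have hl3 : 0 < len d j k x := hpos j k hjk x hx
  have hs1 : 0 < Real.sinh (len d i j x) := Real.sinh_pos_iff.2 (hpos i j hij x hx)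
  have hs2 : 0 < Real.sinh (len d i k x) := Real.sinh_pos_iff.2 hl2
  have hs3 : 0 < Real.sinh (len d j k x) := Real.sinh_pos_iff.2 hl3
  have hsP : 0 < Real.sqrt P := Real.sqrt_pos.2 hPpos
  have key : pd k (hGamma d k) x
      = -(Real.cosh (len d i k x) * pd k (hGamma d i) x
          + Real.cosh (len d j k x) * pd k (hGamma d j) x) := by
    rw [hEi, hEj, hEk]
    exact keyalg (Real.cosh (len d i j x)) (Real.cosh (len d i k x)) (Real.cosh (len d j k x))
      (Real.sinh (len d i j x)) (Real.sinh (len d i k x)) (Real.sinh (len d j k x))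
      (pd k (len d i k) x) (pd k (len d j k) x) (Real.sqrt P)
      (Real.sinh_sq _) (Real.sinh_sq _) (Real.sinh_sq _) hs1.ne' hs2.ne' hs3.ne' hsP.ne'
  have hd0 := (pd_gamma hUopen hsmooth hpos htri hx 0 1 2 k (by decide) (by decide)
    (by decide) _ rfl).2.1
  have hd1 := (pd_gamma hUopen hsmooth hpos htri hx 1 0 2 k (by decide) (by decide)
    (by decide) _ rfl).2.1
  have hd2 := (pd_gamma hUopen hsmooth hpos htri hx 2 0 1 k (by decide) (by decide)
    (by decide) _ rfl).2.1
  have hAdiff : DifferentiableAt ℝ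
      (fun y => Real.pi - hGamma d 0 y - hGamma d 1 y - hGamma d 2 y) x :=
    (((differentiableAt_const Real.pi).sub hd0).sub hd1).sub hd2
  have hAeq : pd k (fun y => Real.pi - hGamma d 0 y - hGamma d 1 y - hGamma d 2 y) x
      = 0 - pd k (hGamma d 0) x - pd k (hGamma d 1) x - pd k (hGamma d 2) x :=
    (pd_line k hAdiff).unique
      ((((hasDerivAt_const (0:ℝ) Real.pi).sub (pd_line k hd0)).sub
        (pd_line k hd1)).sub (pd_line k hd2))
  have hsum : pd k (hGamma d 0) x + pd k (hGamma d 1) x + pd k (hGamma d 2) x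
      = pd k (hGamma d i) x + pd k (hGamma d j) x + pd k (hGamma d k) x := by
    rcases perm3 i j k hij hjk hik with ⟨rfl, rfl, rfl⟩ | ⟨rfl, rfl, rfl⟩ | ⟨rfl, rfl, rfl⟩ |
      ⟨rfl, rfl, rfl⟩ | ⟨rfl, rfl, rfl⟩ | ⟨rfl, rfl, rfl⟩ <;> ring
  have hone : pd k (fun y => Real.pi - hGamma d 0 y - hGamma d 1 y - hGamma d 2 y) x
      = (Real.cosh (len d i k x) - 1) * pd k (hGamma d i) x
        + (Real.cosh (len d j k x) - 1) * pd k (hGamma d j) x := by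
    rw [hAeq]
    nlinarith [hsum, key]
  refine ⟨hone, fun hp1 hp2 => ?_⟩
  rw [hone]
  have hc2 : 1 < Real.cosh (len d i k x) := Real.one_lt_cosh.2 hl2.ne'
  have hc3 : 1 < Real.cosh (len d j k x) := Real.one_lt_cosh.2 hl3.ne'
  have m1 := mul_pos (sub_pos.2 hc2) hp1
  have m2 := mul_pos (sub_pos.2 hc3) hp2
  linarith
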